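/- The reliability vector sequence R satisfies the renewal equation R = (S q)_U + q_{UU} * R, and consequently R = (δI − q_{UU})^{(−1)} * (S q)_U = ψ_{UU} * (S q)_U. -/

import Mathlib

/-!
Condition on the first jump `(u, x)` of the embedded chain from `i ∈ U`. If `x > k`, the
semi-Markov chain is still in `i` at time `k`; if `x ≤ k` and `u ∉ U`, it is in `D` at time `x`;
if `x ≤ k` and `u ∈ U`, the Markov property at the jump time `x` restarts the problem from `u`
with horizon `k - x`. This gives `R = (S q)_U + q_UU * R`. The kernel only prescribes
probabilities of cylinders of the jump history, so the Markov property is proved for survival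
events intersected with arbitrary cylinders, by strong induction on the horizon. Since
`q_UU` vanishes at time `0`, the renewal equation has a unique solution, and
`ψ_UU * (S q)_U` is one because `ψ_UU = δI + q_UU * ψ_UU`.
-/

open MeasureTheory Filter Topology Finset ProbabilityTheory

noncomputable section

namespace SMCPaper

variable {E : Type} [Fintype E] [DecidableEq E] {Ω : Type} [MeasurableSpace Ω]

/-- `q` is a (discrete-time) semi-Markov kernel on the finite state space `E`:
nonnegative entries, `q i j 0 = 0`, and total mass `1` from every state. -/
def IsSemiMarkovKernel (q : E → E → ℕ → ℝ) : Prop :=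
  (∀ i j k, 0 ≤ q i j k) ∧ (∀ i j, q i j 0 = 0) ∧
    ∀ i, HasSum (fun p : E × ℕ => q i p.1 p.2) 1

/-- The sojourn times `X n = S n − S (n−1)` (so `X 0 = 0` when `S 0 = 0`). -/
def Xproc (S : ℕ → Ω → ℕ) (n : ℕ) (ω : Ω) : ℕ := S n ω - S (n - 1) ω

/-- `(J, S)` is a Markov renewal chain with semi-Markov kernel `q` under the family of
probability measures `P i₀` (the chain starting at `i₀`):  `J 0 = i₀`, `S 0 = 0` a.s., and
the process `(J, X)` is a time-homogeneous Markov chain with transitions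
`P(J_{n+1} = j, X_{n+1} = k | J_n = i, past) = q i j k`. -/
def IsMarkovRenewalChain (P : E → Measure Ω) (J : ℕ → Ω → E) (S : ℕ → Ω → ℕ)
    (q : E → E → ℕ → ℝ) : Prop :=
  (∀ i, IsProbabilityMeasure (P i)) ∧
  (∀ n i, MeasurableSet {ω | J n ω = i}) ∧
  (∀ n k, MeasurableSet {ω | S n ω = k}) ∧
  (∀ i₀, P i₀ {ω | J 0 ω = i₀ ∧ S 0 ω = 0} = 1) ∧
  (∀ i₀ (n : ℕ) (js : ℕ → E) (xs : ℕ → ℕ),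
    P i₀ ({ω | J (n+1) ω = js (n+1) ∧ Xproc S (n+1) ω = xs (n+1)} ∩
        {ω | ∀ l ≤ n, J l ω = js l ∧ Xproc S l ω = xs l}) =
      ENNReal.ofReal (q (js n) (js (n+1)) (xs (n+1))) *
        P i₀ {ω | ∀ l ≤ n, J l ω = js l ∧ Xproc S l ω = xs l})

/-- First hitting time (after time `0`) of the state `j` by the embedded chain `J`. -/
def tau (J : ℕ → Ω → E) (j : E) (ω : Ω) : ℕ := sInf {n | 1 ≤ n ∧ J n ω = j}

/-- Mean recurrence time `μ_{ii} = E_i[S_{τ_i}]`. -/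
def mrt (P : E → Measure Ω) (J : ℕ → Ω → E) (S : ℕ → Ω → ℕ) (i : E) : ℝ :=
  ∫ ω, (S (tau J i ω) ω : ℝ) ∂(P i)

/-- Assumption (A): irreducibility of the embedded chain, aperiodicity of the Markov
renewal chain, and positive recurrence. -/
def AssumptionA (P : E → Measure Ω) (J : ℕ → Ω → E) (S : ℕ → Ω → ℕ) : Prop :=
  (∀ i j : E, 0 < P i {ω | ∃ n, 1 ≤ n ∧ J n ω = j}) ∧
  (∀ i : E, ∀ d : ℕ,
      (∀ k, 0 < P i {ω | S (tau J i ω) ω = k} → d ∣ k) → d = 1) ∧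
  (∀ i : E, (∀ᵐ ω ∂(P i), ∃ n, 1 ≤ n ∧ J n ω = i) ∧
      Integrable (fun ω => (S (tau J i ω) ω : ℝ)) (P i))

/-- `N(M)`: the number of jumps of the Markov renewal chain up to time `M`. -/
def Ncnt (S : ℕ → Ω → ℕ) (M : ℕ) (ω : Ω) : ℕ := sSup {n | S n ω ≤ M}

/-- `N_i(M)`: the number of visits of the embedded chain to `i` before time `M`. -/
def Nvis (J : ℕ → Ω → E) (S : ℕ → Ω → ℕ) (i : E) (M : ℕ) (ω : Ω) : ℕ :=
  ∑ n ∈ Finset.Icc 1 (Ncnt S M ω), if J (n-1) ω = i then 1 else 0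

/-- The empirical (nonparametric) estimator `q̂(M)` of the semi-Markov kernel. -/
def qhat (J : ℕ → Ω → E) (S : ℕ → Ω → ℕ) (M : ℕ) (ω : Ω) (i j : E) (k : ℕ) : ℝ :=
  (∑ n ∈ Finset.Icc 1 (Ncnt S M ω),
      if J (n-1) ω = i ∧ J n ω = j ∧ Xproc S n ω = k then (1:ℝ) else 0) /
    (Nvis J S i M ω : ℝ)

/-- The entry of a matrix sequence at `e = (i, j, k)`. -/
def entry (A : E → E → ℕ → ℝ) (e : E × E × ℕ) : ℝ := A e.1 e.2.1 e.2.2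

/-- Matrix convolution of matrix sequences. -/
def mconv (A B : E → E → ℕ → ℝ) : E → E → ℕ → ℝ := fun i j k =>
  ∑ l ∈ Finset.range (k+1), ∑ u, A i u l * B u j (k - l)

/-- Convolution of scalar sequences. -/
def sconv (a b : ℕ → ℝ) : ℕ → ℝ := fun k => ∑ l ∈ Finset.range (k+1), a l * b (k - l)

/-- The identity `δI` for matrix convolution. -/
def deltaI : E → E → ℕ → ℝ := fun i j k => if i = j ∧ k = 0 then 1 else 0

/-- `n`-fold matrix convolution power. -/
def mpow (A : E → E → ℕ → ℝ) : ℕ → E → E → ℕ → ℝ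
  | 0 => deltaI
  | n + 1 => mconv A (mpow A n)

/-- The convolution inverse `(δI − A)^{(−1)} = ∑_{n ≥ 0} A^{(n)}`. -/
def psiOf (A : E → E → ℕ → ℝ) : E → E → ℕ → ℝ := fun i j k => ∑' n, mpow A n i j k

/-- The operator `S`: `(S A)_{ij}(k) = 1{i=j} ∑_{j'} ∑_{k' > k} A_{ij'}(k')`. -/
def Sop (A : E → E → ℕ → ℝ) : E → E → ℕ → ℝ := fun i j k =>
  if i = j then ∑' p : E × ℕ, if k < p.2 then A i p.1 p.2 else 0 else 0

/-- Cumulative sum of a scalar sequence, `(cumul a) k = ∑_{l ≤ k} a l`. -/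
def cumul (a : ℕ → ℝ) (k : ℕ) : ℝ := ∑ l ∈ Finset.range (k+1), a l

/-- `H_j(k) = ∑_{j'} ∑_{k' ≤ k} q_{jj'}(k')`, the sojourn time c.d.f. in state `j`. -/
def Hseq (q : E → E → ℕ → ℝ) (j : E) (k : ℕ) : ℝ :=
  ∑ j', ∑ l ∈ Finset.range (k+1), q j j' l

/-- The matrix sequence `δ^{et}` with entry `1` at `et` and `0` elsewhere. -/
def deltaM (et : E × E × ℕ) : E → E → ℕ → ℝ := fun i j k => if (i, j, k) = et then 1 else 0

/-- The matrix sequence `q^{it}` with `q^{it}_{ij}(k) = 1{i = it} q_{ij}(k)`. -/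
def qres (q : E → E → ℕ → ℝ) (it : E) : E → E → ℕ → ℝ :=
  fun i j k => if i = it then q i j k else 0

/-- The semi-Markov chain `Z_k = J_{N(k)}` associated to `(J, S)`. -/
def Zproc (J : ℕ → Ω → E) (S : ℕ → Ω → ℕ) (k : ℕ) (ω : Ω) : E := J (Ncnt S k ω) ω

/-- The distribution matrix sequence `P_{ij}(k) = P_i(Z_k = j)` of the semi-Markov chain. -/
def Pdist (P : E → Measure Ω) (J : ℕ → Ω → E) (S : ℕ → Ω → ℕ) (i j : E) (k : ℕ) : ℝ :=
  (P i {ω | Zproc J S k ω = j}).toReal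

/-- The estimator `P̂(M) = ψ̂(M) * S q̂(M)` of the distribution matrix sequence. -/
def Phat (J : ℕ → Ω → E) (S : ℕ → Ω → ℕ) (M : ℕ) (ω : Ω) : E → E → ℕ → ℝ :=
  mconv (psiOf (qhat J S M ω)) (Sop (qhat J S M ω))

/-- The reliability vector sequence `R_i(k) = P_i(T_D > k)`, for `i ∈ U`,
where `D = Uᶜ` and `T_D` is the first entrance time of `Z` into `D`. -/
def Rrel (P : E → Measure Ω) (J : ℕ → Ω → E) (S : ℕ → Ω → ℕ) (U : Finset E)
    (i : E) (k : ℕ) : ℝ :=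
  (P i {ω | ∀ l ≤ k, Zproc J S l ω ∈ U}).toReal

/-- Restriction of a matrix sequence to `Ũ = U × U × ℕ` (extended by `0`). -/
def restrictUU (U : Finset E) (A : E → E → ℕ → ℝ) : E → E → ℕ → ℝ :=
  fun i j k => if i ∈ U ∧ j ∈ U then A i j k else 0

/-- Convolution of a matrix sequence with a vector sequence. -/
def mvconv (A : E → E → ℕ → ℝ) (v : E → ℕ → ℝ) : E → ℕ → ℝ := fun i k =>
  ∑ l ∈ Finset.range (k+1), ∑ u, A i u l * v u (k - l)

/-- The diagonal `(A)_U` of a matrix sequence, as a vector sequence. -/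
def diagOf (A : E → E → ℕ → ℝ) : E → ℕ → ℝ := fun i k => A i i k

/-- The estimator `R̂(M) = ψ̂_UU(M) * (S q̂(M))_U` of the reliability vector sequence. -/
def Rhat (J : ℕ → Ω → E) (S : ℕ → Ω → ℕ) (U : Finset E) (M : ℕ) (ω : Ω) : E → ℕ → ℝ :=
  mvconv (psiOf (restrictUU U (qhat J S M ω))) (diagOf (Sop (qhat J S M ω)))

/-- `μG` is the law of a centered Gaussian family indexed by `ι` with covariance `V`:
every finite linear combination of coordinates has a centered normal distribution with the
appropriate variance. -/
def IsCenteredGaussianLaw {ι : Type} (μG : Measure (ι → ℝ)) (V : ι → ι → ℝ) : Prop :=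
  ∀ a : ι →₀ ℝ,
    Measure.map (fun x => ∑ e ∈ a.support, a e * x e) μG =
      gaussianReal 0
        (Real.toNNReal (∑ e ∈ a.support, ∑ e' ∈ a.support, a e * V e e' * a e'))

/-- `(Z_e)_{e ∈ ι}` is a centered Gaussian family with covariance `V` under `P`. -/
def IsCenteredGaussianFamily {ι : Type} (P : Measure Ω) (Z : ι → Ω → ℝ)
    (V : ι → ι → ℝ) : Prop :=
  (∀ e, Measurable (Z e)) ∧
  ∀ a : ι →₀ ℝ,
    Measure.map (fun ω => ∑ e ∈ a.support, a e * Z e ω) P =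
      gaussianReal 0
        (Real.toNNReal (∑ e ∈ a.support, ∑ e' ∈ a.support, a e * V e e' * a e'))

/-- The covariance matrix `V^q` of the CLT for `q̂`, with `μr i = μ_{ii}`. -/
def Vq (q : E → E → ℕ → ℝ) (μr : E → ℝ) : (E × E × ℕ) → (E × E × ℕ) → ℝ := fun e e' =>
  μr e.1 * (if e.1 = e'.1 then 1 else 0) * entry q e *
    ((if e.2.1 = e'.2.1 ∧ e.2.2 = e'.2.2 then 1 else 0) - entry q e')

end SMCPaper

namespace SMCPaper

open scoped ENNReal

variable {E : Type}

lemma mk_sconv (a b : ℕ → ℝ) :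
    PowerSeries.mk (sconv a b) = PowerSeries.mk a * PowerSeries.mk b := by
  ext k
  rw [PowerSeries.coeff_mk, PowerSeries.coeff_mul,
    Finset.Nat.sum_antidiagonal_eq_sum_range_succ_mk]
  simp [sconv]

lemma sconv_assoc (a b c : ℕ → ℝ) : sconv (sconv a b) c = sconv a (sconv b c) := by
  funext k
  simpa only [PowerSeries.coeff_mk] using
    congrArg (PowerSeries.coeff k) (show PowerSeries.mk (sconv (sconv a b) c)
      = PowerSeries.mk (sconv a (sconv b c)) by simp only [mk_sconv, mul_assoc])

lemma sconv_sum_left {ι : Type*} (s : Finset ι) (a : ι → ℕ → ℝ) (b : ℕ → ℝ) :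
    sconv (∑ w ∈ s, a w) b = ∑ w ∈ s, sconv (a w) b := by
  funext k
  simp only [sconv, Finset.sum_apply, Finset.sum_mul]
  exact Finset.sum_comm

lemma sconv_sum_right {ι : Type*} (s : Finset ι) (a : ℕ → ℝ) (b : ι → ℕ → ℝ) :
    sconv a (∑ w ∈ s, b w) = ∑ w ∈ s, sconv a (b w) := by
  funext k
  simp only [sconv, Finset.sum_apply, Finset.mul_sum]
  exact Finset.sum_comm

section Convolution

variable [Fintype E]

lemma mconv_apply_eq_sum_sconv (A B : E → E → ℕ → ℝ) (i j : E) :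
    mconv A B i j = ∑ u, sconv (A i u) (B u j) := by
  funext k
  simp only [mconv, sconv, Finset.sum_apply]
  exact Finset.sum_comm

lemma mvconv_apply_eq_sum_sconv (A : E → E → ℕ → ℝ) (v : E → ℕ → ℝ) (i : E) :
    mvconv A v i = ∑ u, sconv (A i u) (v u) := by
  funext k
  simp only [mvconv, sconv, Finset.sum_apply]
  exact Finset.sum_comm

lemma mvconv_mconv (A B : E → E → ℕ → ℝ) (v : E → ℕ → ℝ) :
    mvconv (mconv A B) v = mvconv A (mvconv B v) := by
  funext i
  simp only [mvconv_apply_eq_sum_sconv, mconv_apply_eq_sum_sconv, sconv_sum_left,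
    sconv_sum_right, sconv_assoc]
  exact Finset.sum_comm

lemma add_mvconv (A B : E → E → ℕ → ℝ) (v : E → ℕ → ℝ) :
    mvconv (A + B) v = mvconv A v + mvconv B v := by
  funext i k
  simp [mvconv, add_mul, Finset.sum_add_distrib]

section ConvolutionInverse

variable [DecidableEq E] {A : E → E → ℕ → ℝ}

lemma mvconv_deltaI (v : E → ℕ → ℝ) : mvconv deltaI v = v := by
  funext i k
  rw [mvconv, Finset.sum_eq_single 0 (fun l _ hl => by simp [deltaI, hl]) (by simp),
    Finset.sum_eq_single i (fun u _ hu => by simp [deltaI, Ne.symm hu]) (by simp)]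
  simp [deltaI]

lemma mpow_apply_eq_zero_of_lt (hA0 : ∀ i j, A i j 0 = 0) {n k : ℕ} (hk : k < n) (i j : E) :
    mpow A n i j k = 0 := by
  induction n generalizing i j k with
  | zero => omega
  | succ n ih =>
    simp only [mpow, mconv]
    refine Finset.sum_eq_zero fun l hl => Finset.sum_eq_zero fun u _ => ?_
    rcases Nat.eq_zero_or_pos l with rfl | hl0
    · simp [hA0]
    · rw [ih (by simp only [Finset.mem_range] at hl; omega), mul_zero]

lemma psiOf_apply_eq_sum (hA0 : ∀ i j, A i j 0 = 0) {k m : ℕ} (hkm : k < m) (i j : E) :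
    psiOf A i j k = ∑ n ∈ Finset.range m, mpow A n i j k :=
  tsum_eq_sum fun n hn =>
    mpow_apply_eq_zero_of_lt hA0 (by simp only [Finset.mem_range] at hn; omega) i j

lemma psiOf_eq_deltaI_add (hA0 : ∀ i j, A i j 0 = 0) :
    psiOf A = deltaI + mconv A (psiOf A) := by
  funext i j k
  have hconv : mconv A (psiOf A) i j k
      = ∑ n ∈ Finset.range (k+1), mconv A (mpow A n) i j k := by
    simp only [mconv]
    conv_rhs => rw [Finset.sum_comm]
    refine Finset.sum_congr rfl fun l hl => ?_
    conv_rhs => rw [Finset.sum_comm]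
    refine Finset.sum_congr rfl fun u _ => ?_
    rw [psiOf_apply_eq_sum hA0 (m := k + 1) (by simp only [Finset.mem_range] at hl; omega),
      Finset.mul_sum]
  rw [Pi.add_apply, Pi.add_apply, Pi.add_apply, hconv,
    psiOf_apply_eq_sum hA0 (by omega : k < k + 2), Finset.sum_range_succ', add_comm]
  rfl

lemma mvconv_psiOf (hA0 : ∀ i j, A i j 0 = 0) (v : E → ℕ → ℝ) :
    mvconv (psiOf A) v = v + mvconv A (mvconv (psiOf A) v) := by
  conv_lhs => rw [psiOf_eq_deltaI_add hA0]
  rw [add_mvconv, mvconv_deltaI, mvconv_mconv]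

end ConvolutionInverse

end Convolution

section Renewal

variable [Fintype E] [DecidableEq E]

lemma eq_of_renewal_eq {A : E → E → ℕ → ℝ} {U : Finset E} (hA0 : ∀ i j, A i j 0 = 0)
    (hAU : ∀ i j k, j ∉ U → A i j k = 0) {v w w' : E → ℕ → ℝ}
    (hw : ∀ i ∈ U, ∀ k, w i k = v i k + mvconv A w i k)
    (hw' : ∀ i ∈ U, ∀ k, w' i k = v i k + mvconv A w' i k) (k : ℕ) :
    ∀ i ∈ U, w i k = w' i k := by
  induction k using Nat.strong_induction_on with
  | _ k ih =>
    intro i hi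
    rw [hw i hi, hw' i hi]
    congr 1
    refine Finset.sum_congr rfl fun l hl => Finset.sum_congr rfl fun u _ => ?_
    rcases Nat.eq_zero_or_pos l with rfl | hl0
    · simp [hA0]
    by_cases hu : u ∈ U
    · rw [ih (k - l) (by simp only [Finset.mem_range] at hl; omega) u hu]
    · simp [hAU i u l hu]

/-- The contribution of a first jump from `i` to `p.1` after sojourn `p.2` to survival in `U`
up to time `k`, when `r u k'` is the probability of survival up to `k'` from `u`. -/
def renewalWeight (q : E → E → ℕ → ℝ) (U : Finset E) (r : E → ℕ → ℝ≥0∞) (i : E) (k : ℕ)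
    (p : E × ℕ) : ℝ≥0∞ :=
  if k < p.2 then ENNReal.ofReal (q i p.1 p.2)
  else if p.1 ∈ U then ENNReal.ofReal (q i p.1 p.2) * r p.1 (k - p.2) else 0

lemma toReal_tsum_renewalWeight {q : E → E → ℕ → ℝ} (hq : IsSemiMarkovKernel q)
    {U : Finset E} {r : E → ℕ → ℝ≥0∞} (hr : ∀ u k, r u k ≠ ⊤) {i : E} (hi : i ∈ U) (k : ℕ) :
    (∑' p, renewalWeight q U r i k p).toReal
      = diagOf (Sop q) i k + mvconv (restrictUU U q) (fun u k => (r u k).toReal) i k := by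
  obtain ⟨hq_nonneg, -, hq_sum⟩ := hq
  set t : E × ℕ → ℝ := fun p => if k < p.2 then q i p.1 p.2 else 0
  set w : E × ℕ → ℝ≥0∞ := fun p =>
    if p.2 ≤ k ∧ p.1 ∈ U then ENNReal.ofReal (q i p.1 p.2) * r p.1 (k - p.2) else 0
  have hsplit : ∀ p, renewalWeight q U r i k p = ENNReal.ofReal (t p) + w p := by
    rintro ⟨u, x⟩
    by_cases hx : k < x
    · simp [renewalWeight, t, w, hx, not_le.mpr hx]
    · simp [renewalWeight, t, w, hx, not_lt.mp hx]
  have ht0 : ∀ p, 0 ≤ t p := fun p => by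
    simp only [t]; split_ifs <;> simp [hq_nonneg]
  have ht : Summable t := (hq_sum i).summable.of_nonneg_of_le ht0 fun p => by
    simp only [t]; split_ifs <;> simp [hq_nonneg]
  have hw_top : ∀ p, w p ≠ ⊤ := fun p => by
    simp only [w]; split_ifs <;> simp [ENNReal.mul_ne_top, hr]
  have hw : ∑' p, w p = ∑ p ∈ Finset.univ ×ˢ Finset.range (k+1), w p :=
    tsum_eq_sum fun p hp => by
      simp only [Finset.mem_product, Finset.mem_univ, Finset.mem_range, true_and] at hp
      simp only [w]; rw [if_neg (by omega)]
  rw [tsum_congr hsplit, ENNReal.tsum_add, ← ENNReal.ofReal_tsum_of_nonneg ht0 ht, hw,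
    ENNReal.toReal_add ENNReal.ofReal_ne_top (ENNReal.sum_ne_top.mpr fun p _ => hw_top p),
    ENNReal.toReal_ofReal (tsum_nonneg ht0), ENNReal.toReal_sum fun p _ => hw_top p]
  congr 1
  · simp [diagOf, Sop, t]
  · rw [Finset.sum_product, Finset.sum_comm]
    refine Finset.sum_congr rfl fun l hl => Finset.sum_congr rfl fun u _ => ?_
    simp only [Finset.mem_range] at hl
    by_cases hu : u ∈ U
    · simp [w, restrictUU, hi, hu, show l ≤ k by omega, ENNReal.toReal_ofReal (hq_nonneg _ _ _)]
    · simp [w, restrictUU, hu]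

end Renewal

lemma measure_inter_iUnion_eq_tsum {α ι : Type*} [MeasurableSpace α] [Countable ι]
    (μ : Measure α) {C : ι → Set α} (hd : Pairwise (Function.onFun Disjoint C))
    (hC : ∀ i, MeasurableSet (C i)) (A : Set α) :
    μ (A ∩ ⋃ i, C i) = ∑' i, μ (A ∩ C i) := by
  rw [← Measure.restrict_apply' (MeasurableSet.iUnion hC), Measure.restrict_iUnion hd hC,
    Measure.sum_apply_of_countable]
  exact tsum_congr fun i => Measure.restrict_apply' (hC i)

section JumpCount

variable {Ω : Type} {S : ℕ → Ω → ℕ} {ω : Ω}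

lemma Ncnt_eq_of_le_of_lt (hS : StrictMono (S · ω)) {m l : ℕ} (h1 : S m ω ≤ l)
    (h2 : l < S (m+1) ω) : Ncnt S l ω = m :=
  IsGreatest.csSup_eq ⟨h1, fun n hn => by
    by_contra! hmn
    exact absurd ((hS.le_iff_le.mpr hmn).trans (hn : S n ω ≤ l)) (not_le.mpr h2)⟩

lemma Ncnt_le_of_lt (hS : StrictMono (S · ω)) {n l : ℕ} (h0 : S 0 ω ≤ l)
    (hl : l < S (n+1) ω) : Ncnt S l ω ≤ n :=
  csSup_le ⟨0, h0⟩ fun m (hm : S m ω ≤ l) =>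
    Nat.lt_succ_iff.mp (hS.lt_iff_lt.mp (hm.trans_lt hl))

end JumpCount

def pathCylinder {Ω : Type} (J : ℕ → Ω → E) (S : ℕ → Ω → ℕ) (n : ℕ) (js : ℕ → E)
    (xs : ℕ → ℕ) : Set Ω :=
  {ω | ∀ l ≤ n, J l ω = js l ∧ Xproc S l ω = xs l}

/-- The event `T_D > K`. -/
def survivalSet {Ω : Type} (J : ℕ → Ω → E) (S : ℕ → Ω → ℕ) (U : Finset E) (K : ℕ) : Set Ω :=
  {ω | ∀ l ≤ K, Zproc J S l ω ∈ U}

section Cylinders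

variable {Ω : Type} {J : ℕ → Ω → E} {S : ℕ → Ω → ℕ} {n : ℕ} {js : ℕ → E} {xs : ℕ → ℕ} {ω : Ω}

lemma pathCylinder_succ :
    pathCylinder J S (n+1) js xs
      = {ω | J (n+1) ω = js (n+1) ∧ Xproc S (n+1) ω = xs (n+1)} ∩ pathCylinder J S n js xs := by
  ext ω
  simp only [pathCylinder, Set.mem_inter_iff, Set.mem_ofPred_eq]
  refine ⟨fun h => ⟨h (n+1) le_rfl, fun l hl => h l (by omega)⟩, fun ⟨hlast, h⟩ l hl => ?_⟩
  rcases Nat.lt_or_ge l (n+1) with hl' | hl'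
  · exact h l (by omega)
  · obtain rfl : l = n + 1 := by omega
    exact hlast

lemma pathCylinder_succ_subset : pathCylinder J S (n+1) js xs ⊆ pathCylinder J S n js xs :=
  fun _ hω l hl => hω l (by omega)

lemma pathCylinder_update (u : E) (x : ℕ) :
    pathCylinder J S n (Function.update js (n+1) u) (Function.update xs (n+1) x)
      = pathCylinder J S n js xs := by
  ext ω
  simp only [pathCylinder, Set.mem_ofPred_eq]
  exact forall₂_congr fun l hl => by
    rw [Function.update_of_ne (by omega), Function.update_of_ne (by omega)]

lemma pathCylinder_eq_iUnion :
    pathCylinder J S n js xs = ⋃ p : E × ℕ,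
      pathCylinder J S (n+1) (Function.update js (n+1) p.1) (Function.update xs (n+1) p.2) := by
  ext ω
  simp only [Set.mem_iUnion, pathCylinder_succ, pathCylinder_update, Set.mem_inter_iff,
    Set.mem_ofPred_eq, Function.update_self]
  exact ⟨fun h => ⟨(J (n+1) ω, Xproc S (n+1) ω), ⟨rfl, rfl⟩, h⟩, fun ⟨_, _, h⟩ => h⟩

lemma pairwise_disjoint_pathCylinder_succ :
    Pairwise (Function.onFun Disjoint fun p : E × ℕ =>
      pathCylinder J S (n+1) (Function.update js (n+1) p.1) (Function.update xs (n+1) p.2)) :=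
  fun p p' hne => Set.disjoint_left.mpr fun ω hω hω' => hne <| by
    have h := hω (n+1) le_rfl
    have h' := hω' (n+1) le_rfl
    simp only [Function.update_self] at h h'
    exact Prod.ext (h.1.symm.trans h'.1) (h.2.symm.trans h'.2)

lemma S_eq_sum_of_mem_pathCylinder (h0 : S 0 ω = 0) (hS : StrictMono (S · ω)) :
    ∀ {n}, ω ∈ pathCylinder J S n js xs → S n ω = ∑ m ∈ Finset.range n, xs (m+1)
  | 0, _ => by simp [h0]
  | n+1, hω => by
    rw [pathCylinder_succ] at hω
    have hx : S (n+1) ω - S n ω = xs (n+1) := hω.1.2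
    have hlt : S n ω < S (n+1) ω := hS (Nat.lt_succ_self n)
    rw [Finset.sum_range_succ, ← S_eq_sum_of_mem_pathCylinder h0 hS hω.2]
    omega

lemma mem_survivalSet_of_lt {U : Finset E} (h0 : S 0 ω = 0) (hS : StrictMono (S · ω))
    (hjs : ∀ l ≤ n, js l ∈ U) (hω : ω ∈ pathCylinder J S n js xs) {K : ℕ}
    (hK : K < S (n+1) ω) : ω ∈ survivalSet J S U K := fun l hl => by
  have hN := Ncnt_le_of_lt hS (by omega) (hl.trans_lt hK)
  rw [Zproc, (hω _ hN).1]
  exact hjs _ hN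

lemma notMem_survivalSet_of_le {U : Finset E} (hS : StrictMono (S · ω))
    (hω : ω ∈ pathCylinder J S n js xs) (hn : js n ∉ U) {K : ℕ} (hK : S n ω ≤ K) :
    ω ∉ survivalSet J S U K := fun hA => hn <| by
  have h := hA (S n ω) hK
  rwa [Zproc, Ncnt_eq_of_le_of_lt hS le_rfl (hS (Nat.lt_succ_self n)), (hω n le_rfl).1] at h

end Cylinders

section MarkovRenewalChain

variable {Ω : Type} [MeasurableSpace Ω] {P : E → Measure Ω} {J : ℕ → Ω → E}
  {S : ℕ → Ω → ℕ} {q : E → E → ℕ → ℝ}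

lemma measurableSet_pathCylinder (hchain : IsMarkovRenewalChain P J S q) (n : ℕ)
    (js : ℕ → E) (xs : ℕ → ℕ) : MeasurableSet (pathCylinder J S n js xs) := by
  have hS : ∀ n, Measurable (S n) := fun n => measurable_to_countable' (hchain.2.2.1 n)
  have hX : ∀ l x, MeasurableSet {ω | Xproc S l ω = x} := fun l x =>
    ((hS l).sub (hS (l-1))) (measurableSet_singleton x)
  simp only [pathCylinder, Set.ofPred_forall]
  exact MeasurableSet.iInter fun l => MeasurableSet.iInter fun _ =>
    (hchain.2.1 l (js l)).inter (hX l (xs l))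

lemma measure_pathCylinder_succ (hchain : IsMarkovRenewalChain P J S q) (i₀ : E) (n : ℕ)
    (js : ℕ → E) (xs : ℕ → ℕ) :
    P i₀ (pathCylinder J S (n+1) js xs)
      = ENNReal.ofReal (q (js n) (js (n+1)) (xs (n+1))) * P i₀ (pathCylinder J S n js xs) := by
  rw [pathCylinder_succ]
  exact hchain.2.2.2.2 i₀ n js xs

lemma ae_initial (hchain : IsMarkovRenewalChain P J S q) (i₀ : E) :
    ∀ᵐ ω ∂P i₀, J 0 ω = i₀ ∧ S 0 ω = 0 := by
  have := hchain.1
  refine (ae_iff_measure_eq ?_).mpr (by rw [hchain.2.2.2.1 i₀, measure_univ])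
  exact ((hchain.2.1 0 i₀).inter (hchain.2.2.1 0 0)).nullMeasurableSet

lemma ae_mem_pathCylinder_zero (hchain : IsMarkovRenewalChain P J S q) (i₀ : E) :
    ∀ᵐ ω ∂P i₀, ω ∈ pathCylinder J S 0 (fun _ => i₀) (fun _ => 0) :=
  (ae_initial hchain i₀).mono fun ω h l hl => by
    obtain rfl : l = 0 := by omega
    exact ⟨h.1, by simp [Xproc]⟩

variable [Countable E]

lemma measure_inter_pathCylinder_eq_tsum (hchain : IsMarkovRenewalChain P J S q) (i₀ : E)
    (B : Set Ω) (n : ℕ) (js : ℕ → E) (xs : ℕ → ℕ) :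
    P i₀ (B ∩ pathCylinder J S n js xs) = ∑' p : E × ℕ, P i₀ (B ∩
      pathCylinder J S (n+1) (Function.update js (n+1) p.1) (Function.update xs (n+1) p.2)) := by
  conv_lhs => rw [pathCylinder_eq_iUnion]
  exact measure_inter_iUnion_eq_tsum _ pairwise_disjoint_pathCylinder_succ
    (fun _ => measurableSet_pathCylinder hchain _ _ _) B

lemma measure_eq_zero_of_forall_pathCylinder (hchain : IsMarkovRenewalChain P J S q)
    {i₀ : E} {B : Set Ω} :
    ∀ n, (∀ js xs, P i₀ (B ∩ pathCylinder J S n js xs) = 0) → P i₀ B = 0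
  | 0, h => by
    rw [← measure_inter_conull (mem_ae_iff.mp (ae_mem_pathCylinder_zero hchain i₀))]
    exact h _ _
  | n+1, h => measure_eq_zero_of_forall_pathCylinder hchain n fun js xs => by
    rw [measure_inter_pathCylinder_eq_tsum hchain]
    simp [h]

lemma measure_Xproc_succ_eq_zero (hq0 : ∀ i j, q i j 0 = 0)
    (hchain : IsMarkovRenewalChain P J S q) (i₀ : E) (n : ℕ) :
    P i₀ {ω | Xproc S (n+1) ω = 0} = 0 :=
  measure_eq_zero_of_forall_pathCylinder hchain (n+1) fun js xs => by
    by_cases hx : xs (n+1) = 0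
    · refine measure_mono_null Set.inter_subset_right ?_
      rw [measure_pathCylinder_succ hchain, hx, hq0, ENNReal.ofReal_zero, zero_mul]
    · exact measure_mono_null (fun ω ⟨h0, hω⟩ => hx ((hω (n+1) le_rfl).2.symm.trans h0))
        measure_empty

/-- Jump times increase strictly (so that the `sSup` defining `Ncnt` is not a junk value)
because the kernel puts no mass on sojourn time `0`. -/
lemma ae_strictMono_S (hq0 : ∀ i j, q i j 0 = 0) (hchain : IsMarkovRenewalChain P J S q)
    (i₀ : E) : ∀ᵐ ω ∂P i₀, S 0 ω = 0 ∧ StrictMono (S · ω) := by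
  have hX : ∀ᵐ ω ∂P i₀, ∀ m, Xproc S (m+1) ω ≠ 0 := ae_all_iff.mpr fun m =>
    measure_eq_zero_iff_ae_notMem.mp (measure_Xproc_succ_eq_zero hq0 hchain i₀ m)
  filter_upwards [ae_initial hchain i₀, hX] with ω h0 hX
  refine ⟨h0.2, strictMono_nat_of_lt_succ fun m => ?_⟩
  have := hX m
  simp only [Xproc, Nat.add_sub_cancel] at this
  omega

end MarkovRenewalChain

/-- The Markov property at the `n`-th jump time `s = xs 1 + ⋯ + xs n`, for survival up to
`s + k`. -/
def SurvivalMarkovProperty {Ω : Type} [MeasurableSpace Ω] (P : E → Measure Ω)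
    (J : ℕ → Ω → E) (S : ℕ → Ω → ℕ) (U : Finset E) (k : ℕ) : Prop :=
  ∀ i₀ n (js : ℕ → E) (xs : ℕ → ℕ), (∀ l ≤ n, js l ∈ U) →
    P i₀ (survivalSet J S U (∑ m ∈ Finset.range n, xs (m+1) + k) ∩ pathCylinder J S n js xs)
      = P i₀ (pathCylinder J S n js xs) * P (js n) (survivalSet J S U k)

section Survival

variable [Countable E] [DecidableEq E] {Ω : Type} [MeasurableSpace Ω] {P : E → Measure Ω}
  {J : ℕ → Ω → E} {S : ℕ → Ω → ℕ} {q : E → E → ℕ → ℝ} {U : Finset E} {k : ℕ}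

lemma measure_survivalSet_inter_pathCylinder_succ (hq0 : ∀ i j, q i j 0 = 0)
    (hchain : IsMarkovRenewalChain P J S q) (ih : ∀ k' < k, SurvivalMarkovProperty P J S U k')
    {i₀ : E} {n : ℕ} {js : ℕ → E} {xs : ℕ → ℕ} (hjs : ∀ l ≤ n, js l ∈ U) (u : E) (x : ℕ) :
    P i₀ (survivalSet J S U (∑ m ∈ Finset.range n, xs (m+1) + k) ∩
        pathCylinder J S (n+1) (Function.update js (n+1) u) (Function.update xs (n+1) x))
      = P i₀ (pathCylinder J S n js xs)
          * renewalWeight q U (fun u k => P u (survivalSet J S U k)) (js n) k (u, x) := by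
  set s := ∑ m ∈ Finset.range n, xs (m+1)
  set C := pathCylinder J S (n+1) (Function.update js (n+1) u) (Function.update xs (n+1) x)
    with hC_def
  have hC : P i₀ C = ENNReal.ofReal (q (js n) u x) * P i₀ (pathCylinder J S n js xs) := by
    rw [hC_def, measure_pathCylinder_succ hchain, pathCylinder_update, Function.update_self,
      Function.update_self, Function.update_of_ne (by omega : n ≠ n + 1)]
  have hC_sub : C ⊆ pathCylinder J S n js xs :=
    pathCylinder_succ_subset.trans (pathCylinder_update u x).subset
  have hsum : ∑ m ∈ Finset.range (n+1), Function.update xs (n+1) x (m+1) = s + x := by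
    rw [Finset.sum_range_succ, Function.update_self]
    congr 1
    exact Finset.sum_congr rfl fun m hm =>
      Function.update_of_ne (by simp only [Finset.mem_range] at hm; omega) _ _
  have hS : ∀ᵐ ω ∂P i₀, ω ∈ C → S (n+1) ω = s + x := by
    filter_upwards [ae_strictMono_S hq0 hchain i₀] with ω ⟨h0, hmono⟩ hω
    rw [S_eq_sum_of_mem_pathCylinder h0 hmono hω, hsum]
  rcases Nat.eq_zero_or_pos x with rfl | hx0
  · rw [measure_mono_null Set.inter_subset_right (by rw [hC, hq0, ENNReal.ofReal_zero, zero_mul])]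
    simp [renewalWeight, hq0]
  rcases lt_or_ge k x with hkx | hxk
  · rw [renewalWeight, if_pos hkx, mul_comm, ← hC]
    refine le_antisymm (measure_mono Set.inter_subset_right) (measure_mono_ae ?_)
    filter_upwards [ae_strictMono_S hq0 hchain i₀, hS] with ω ⟨h0, hmono⟩ hSω hω
    exact ⟨mem_survivalSet_of_lt h0 hmono hjs (hC_sub hω) (by rw [hSω hω]; omega), hω⟩
  by_cases hu : u ∈ U
  · have hjs' : ∀ l ≤ n+1, Function.update js (n+1) u l ∈ U := fun l hl => by
      rcases Nat.lt_or_ge l (n+1) with hl' | hl'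
      · rw [Function.update_of_ne (by omega)]
        exact hjs l (by omega)
      · rw [show l = n+1 by omega, Function.update_self]
        exact hu
    have h := ih (k - x) (by omega) i₀ (n+1) (Function.update js (n+1) u)
      (Function.update xs (n+1) x) hjs'
    rw [hsum, show s + x + (k - x) = s + k by omega, Function.update_self, ← hC_def] at h
    rw [h, hC, renewalWeight, if_neg (by omega), if_pos hu]
    ring
  · rw [renewalWeight, if_neg (by omega), if_neg hu, mul_zero, measure_eq_zero_iff_ae_notMem]
    filter_upwards [ae_strictMono_S hq0 hchain i₀, hS] with ω ⟨_, hmono⟩ hSω ⟨hA, hω⟩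
    exact notMem_survivalSet_of_le hmono hω (by rwa [Function.update_self])
      (by rw [hSω hω]; omega) hA

lemma measure_survivalSet_inter_pathCylinder (hq0 : ∀ i j, q i j 0 = 0)
    (hchain : IsMarkovRenewalChain P J S q) (ih : ∀ k' < k, SurvivalMarkovProperty P J S U k')
    {i₀ : E} {n : ℕ} {js : ℕ → E} {xs : ℕ → ℕ} (hjs : ∀ l ≤ n, js l ∈ U) :
    P i₀ (survivalSet J S U (∑ m ∈ Finset.range n, xs (m+1) + k) ∩ pathCylinder J S n js xs)
      = P i₀ (pathCylinder J S n js xs)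
          * ∑' p, renewalWeight q U (fun u k => P u (survivalSet J S U k)) (js n) k p := by
  rw [measure_inter_pathCylinder_eq_tsum hchain, ← ENNReal.tsum_mul_left]
  exact tsum_congr fun p =>
    measure_survivalSet_inter_pathCylinder_succ hq0 hchain ih hjs p.1 p.2

lemma measure_survivalSet_eq_tsum (hq0 : ∀ i j, q i j 0 = 0)
    (hchain : IsMarkovRenewalChain P J S q) (ih : ∀ k' < k, SurvivalMarkovProperty P J S U k')
    {i : E} (hi : i ∈ U) :
    P i (survivalSet J S U k)
      = ∑' p, renewalWeight q U (fun u k => P u (survivalSet J S U k)) i k p := by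
  have := hchain.1
  have hC : P i (pathCylinder J S 0 (fun _ => i) (fun _ => 0))ᶜ = 0 :=
    mem_ae_iff.mp (ae_mem_pathCylinder_zero hchain i)
  have hC1 : P i (pathCylinder J S 0 (fun _ => i) (fun _ => 0)) = 1 := by
    rw [← Set.univ_inter (pathCylinder _ _ _ _ _), measure_inter_conull hC, measure_univ]
  have h := measure_survivalSet_inter_pathCylinder hq0 hchain ih (i₀ := i) (n := 0)
    (xs := fun _ => 0) fun _ _ => hi
  rwa [Finset.sum_range_zero, zero_add, measure_inter_conull hC, hC1, one_mul] at h

lemma survivalMarkovProperty (hq0 : ∀ i j, q i j 0 = 0)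
    (hchain : IsMarkovRenewalChain P J S q) (U : Finset E) (k : ℕ) :
    SurvivalMarkovProperty P J S U k := by
  induction k using Nat.strong_induction_on with
  | _ k ih =>
    intro i₀ n js xs hjs
    rw [measure_survivalSet_inter_pathCylinder hq0 hchain ih hjs,
      measure_survivalSet_eq_tsum hq0 hchain ih (hjs n le_rfl)]

end Survival

variable [Fintype E] [DecidableEq E] {Ω : Type} [MeasurableSpace Ω]

theorem statement10_general (q : E → E → ℕ → ℝ) (P : E → Measure Ω) (J : ℕ → Ω → E)
    (S : ℕ → Ω → ℕ) (hq : IsSemiMarkovKernel q)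
    (hchain : IsMarkovRenewalChain P J S q)
    (U : Finset E) :
    (∀ i ∈ U, ∀ k : ℕ,
        Rrel P J S U i k =
          diagOf (Sop q) i k + mvconv (restrictUU U q) (Rrel P J S U) i k) ∧
    ∀ i ∈ U, ∀ k : ℕ,
      Rrel P J S U i k = mvconv (psiOf (restrictUU U q)) (diagOf (Sop q)) i k := by
  have := hchain.1
  have hrenewal : ∀ i ∈ U, ∀ k, Rrel P J S U i k
      = diagOf (Sop q) i k + mvconv (restrictUU U q) (Rrel P J S U) i k := fun i hi k => by
    change (P i (survivalSet J S U k)).toReal = _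
    rw [measure_survivalSet_eq_tsum hq.2.1 hchain
        (fun k' _ => survivalMarkovProperty hq.2.1 hchain U k') hi,
      toReal_tsum_renewalWeight hq (fun _ _ => measure_ne_top _ _) hi]
    rfl
  have hA0 : ∀ i j, restrictUU U q i j 0 = 0 := fun i j => by simp [restrictUU, hq.2.1]
  refine ⟨hrenewal, fun i hi k => eq_of_renewal_eq hA0
    (fun i j k hj => by simp [restrictUU, hj]) hrenewal (fun i _ k => ?_) k i hi⟩
  exact congrFun (congrFun (mvconv_psiOf hA0 _) i) k

/-- The reliability vector sequence satisfies the renewal equation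
`R = (S q)_U + q_UU * R`, and consequently `R = ψ_UU * (S q)_U`. -/
theorem statement10 (q : E → E → ℕ → ℝ) (P : E → Measure Ω) (J : ℕ → Ω → E)
    (S : ℕ → Ω → ℕ) (hq : IsSemiMarkovKernel q)
    (hchain : IsMarkovRenewalChain P J S q)
    (U : Finset E) (hU : U.Nonempty) (hU' : U ≠ Finset.univ) :
    (∀ i ∈ U, ∀ k : ℕ,
        Rrel P J S U i k =
          diagOf (Sop q) i k + mvconv (restrictUU U q) (Rrel P J S U) i k) ∧
    ∀ i ∈ U, ∀ k : ℕ,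
      Rrel P J S U i k = mvconv (psiOf (restrictUU U q)) (diagOf (Sop q)) i k :=
  statement10_general q P J S hq hchain U

end SMCPaper
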